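/- arXiv:1802.08700 — 2 statements merged into one kernel-verified Lean document; each statement's English description precedes it below -/
import Mathlib

section
/- Let x₂, …, xₙ be natural numbers and S = x₂ + ⋯ + xₙ. Then for every x₁ ≥ S(S+1)/2, N(x₁, x₂, …, xₙ) = x₁ + S. In particular, the least threshold A(x₂, …, xₙ) (the least x₁ such that N(x₁, x₂, …, xₙ) = x₁ + S) is well-defined and is bounded above by a quadratic function of S. -/
lemma sum_update_lt {n : ℕ} (x : Fin n → ℕ) (i : Fin n) (v : ℕ) (h : v < x i) :
    (∑ j, Function.update x i v j) < ∑ j, x j := by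
  apply Finset.sum_lt_sum
  · intro j _
    rcases eq_or_ne j i with rfl | hj
    · simpa using h.le
    · simp [Function.update_of_ne hj]
  · exact ⟨i, Finset.mem_univ i, by simpa using h⟩

/-- Sprague–Grundy value of the Auxiliary Nim game
`(*a) ⊞ ((*x 0) ⊕ ⋯ ⊕ (*x (n-1)))`, where `x : Fin n → ℕ` lists the piles
`x₂, …, xₙ` and `a` is the auxiliary pile `x₁`.  It is the mex of the
Sprague–Grundy values of the one-move successors: strictly decrease `a`,
or strictly decrease exactly one of the piles `x i`, or do both. -/
noncomputable def NAux {n : ℕ} (a : ℕ) (x : Fin n → ℕ) : ℕ :=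
  sInf {m : ℕ |
    (∀ a', a' < a → NAux a' x ≠ m) ∧
    (∀ (i : Fin n) (v : ℕ), v < x i → NAux a (Function.update x i v) ≠ m) ∧
    (∀ a', a' < a → ∀ (i : Fin n) (v : ℕ), v < x i →
      NAux a' (Function.update x i v) ≠ m)}
termination_by a + ∑ j, x j
decreasing_by
  · exact Nat.add_lt_add_right ‹_› _
  · exact Nat.add_lt_add_left (sum_update_lt x i v ‹_›) a
  · exact Nat.add_lt_add ‹_› (sum_update_lt x i v ‹_›)

/-!
Write `S = ∑ xᵢ` and `T S = S (S + 1) / 2`. Always `N(a, x) ≤ a + S`, and once `N(c, x) = c + S`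
the same equality holds for every `a ≥ c`. Induct on `S`: lowering a nonzero pile of `x` by one
gives `y` with sum `S - 1` and, by induction, `N(b, y) = b + S - 1` for all `b ≥ T (S - 1)`.
If `T (S - 1) + S - 1 ≤ N(c, x) < c + S`, then `b = N(c, x) - (S - 1)` lies in `[T (S - 1), c]`,
so the successor `(b, y)` of `(c, x)` has the value `N(c, x)`, which is absurd. Hence every
`N(c, x)` is `c + S` or below `T (S - 1) + S - 1 = T S - 1`, and since `c ↦ N(c, x)` is injective,
pigeonhole over `c < T S` produces the required `c`.
-/

open Function Finset

lemma sum_update_add_self {ι M : Type*} [Fintype ι] [DecidableEq ι] [AddCommMonoid M]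
    (f : ι → M) (i : ι) (b : M) : ∑ j, update f i b j + f i = ∑ j, f j + b := by
  rw [sum_update_of_mem (mem_univ i), ← add_sum_erase univ f (mem_univ i),
    sdiff_singleton_eq_erase]
  abel

section NAux

variable {n : ℕ}

def optionValues (a : ℕ) (x : Fin n → ℕ) : Set ℕ :=
  {m | (∃ a' < a, NAux a' x = m) ∨
    (∃ i, ∃ v < x i, NAux a (update x i v) = m) ∨
    (∃ a' < a, ∃ i, ∃ v < x i, NAux a' (update x i v) = m)}

theorem NAux_eq_sInf_compl_optionValues (a : ℕ) (x : Fin n → ℕ) :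
    NAux a x = sInf (optionValues a x)ᶜ := by
  rw [NAux]
  congr 1
  ext m
  simp [optionValues]

theorem exists_lt_of_mem_optionValues {a m : ℕ} {x : Fin n → ℕ} (hm : m ∈ optionValues a x) :
    ∃ (a' : ℕ) (y : Fin n → ℕ), a' + ∑ j, y j < a + ∑ j, x j ∧ NAux a' y = m := by
  rcases hm with ⟨a', ha, rfl⟩ | ⟨i, v, hv, rfl⟩ | ⟨a', ha, i, v, hv, rfl⟩
  · exact ⟨a', x, by omega, rfl⟩
  · exact ⟨a, _, by have := sum_update_lt x i v hv; omega, rfl⟩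
  · exact ⟨a', _, by have := sum_update_lt x i v hv; omega, rfl⟩

theorem NAux_le_add_sum (a : ℕ) (x : Fin n → ℕ) : NAux a x ≤ a + ∑ j, x j := by
  rw [NAux_eq_sInf_compl_optionValues]
  refine Nat.sInf_le fun hmem => ?_
  obtain ⟨a', y, hlt, hy⟩ := exists_lt_of_mem_optionValues hmem
  have := NAux_le_add_sum a' y
  omega
termination_by a + ∑ j, x j

theorem lt_add_sum_of_mem_optionValues {a m : ℕ} {x : Fin n → ℕ}
    (hm : m ∈ optionValues a x) : m < a + ∑ j, x j := by
  obtain ⟨a', y, hlt, rfl⟩ := exists_lt_of_mem_optionValues hm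
  exact (NAux_le_add_sum a' y).trans_lt hlt

theorem NAux_notMem_optionValues (a : ℕ) (x : Fin n → ℕ) : NAux a x ∉ optionValues a x := by
  rw [NAux_eq_sInf_compl_optionValues]
  exact Nat.sInf_mem (s := (optionValues a x)ᶜ)
    ⟨a + ∑ j, x j, fun h => (lt_add_sum_of_mem_optionValues h).false⟩

theorem mem_optionValues_of_lt_NAux {a m : ℕ} {x : Fin n → ℕ} (hm : m < NAux a x) :
    m ∈ optionValues a x := by
  rw [NAux_eq_sInf_compl_optionValues] at hm
  exact not_not.1 (Nat.notMem_of_lt_sInf hm)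

theorem NAux_eq_of_forall_lt_mem {a k : ℕ} {x : Fin n → ℕ} (hk : k ∉ optionValues a x)
    (h : ∀ m < k, m ∈ optionValues a x) : NAux a x = k := by
  rw [NAux_eq_sInf_compl_optionValues]
  exact IsLeast.csInf_eq ⟨hk, fun m hm => not_lt.1 fun hlt => hm (h m hlt)⟩

theorem NAux_mem_optionValues_of_lt {a' a : ℕ} (x : Fin n → ℕ) (h : a' < a) :
    NAux a' x ∈ optionValues a x :=
  Or.inl ⟨a', h, rfl⟩

theorem NAux_update_mem_optionValues {a' a v : ℕ} {x : Fin n → ℕ} {i : Fin n} (ha : a' ≤ a)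
    (hv : v < x i) : NAux a' (update x i v) ∈ optionValues a x := by
  rcases ha.lt_or_eq with ha | rfl
  · exact Or.inr (Or.inr ⟨a', ha, i, v, hv, rfl⟩)
  · exact Or.inr (Or.inl ⟨i, v, hv, rfl⟩)

theorem optionValues_mono (x : Fin n → ℕ) : Monotone (optionValues · x) := by
  rintro a b hab m (⟨a', ha, rfl⟩ | ⟨i, v, hv, rfl⟩ | ⟨a', ha, i, v, hv, rfl⟩)
  · exact NAux_mem_optionValues_of_lt x (ha.trans_le hab)
  · exact NAux_update_mem_optionValues hab hv
  · exact NAux_update_mem_optionValues (ha.le.trans hab) hv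

theorem NAux_injective (x : Fin n → ℕ) : Injective (NAux · x) := by
  have hne {a' a : ℕ} (h : a' < a) : NAux a' x ≠ NAux a x := fun heq =>
    NAux_notMem_optionValues a x (heq ▸ NAux_mem_optionValues_of_lt x h)
  intro a b h
  rcases lt_trichotomy a b with hlt | rfl | hgt
  · exact absurd h (hne hlt)
  · rfl
  · exact absurd h.symm (hne hgt)

theorem NAux_succ_eq_add_sum {c : ℕ} {x : Fin n → ℕ} (h : NAux c x = c + ∑ j, x j) :
    NAux (c + 1) x = c + 1 + ∑ j, x j := by
  refine NAux_eq_of_forall_lt_mem (fun hmem => (lt_add_sum_of_mem_optionValues hmem).false)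
    fun m hm => ?_
  rcases (show m ≤ c + ∑ j, x j by omega).lt_or_eq with hlt | rfl
  · exact optionValues_mono x c.le_succ (mem_optionValues_of_lt_NAux (h ▸ hlt))
  · exact h ▸ NAux_mem_optionValues_of_lt x c.lt_succ_self

theorem NAux_eq_add_sum_of_le {c a : ℕ} {x : Fin n → ℕ} (h : NAux c x = c + ∑ j, x j)
    (hca : c ≤ a) : NAux a x = a + ∑ j, x j := by
  induction a, hca using Nat.le_induction with
  | base => exact h
  | succ a _ ih => exact NAux_succ_eq_add_sum ih

theorem exists_le_NAux_eq_add_sum {k : ℕ} {x : Fin n → ℕ}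
    (h : ∀ c, NAux c x = c + ∑ j, x j ∨ NAux c x < k) : ∃ c ≤ k, NAux c x = c + ∑ j, x j := by
  by_contra! hne
  obtain ⟨a, -, b, -, hab, heq⟩ := exists_ne_map_eq_of_card_lt_of_maps_to
    (s := range (k + 1)) (t := range k) (f := (NAux · x)) (by simp) fun c hc => by
      simp only [coe_range, Set.mem_Iio] at hc ⊢
      exact (h c).resolve_left (hne c (by omega))
  exact hab (NAux_injective x heq)

theorem NAux_eq_add_sum_or_lt {x : Fin n → ℕ} {i : Fin n} {s t : ℕ} (hi : x i ≠ 0)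
    (hs : ∑ j, x j = s + 1) (hy : ∀ b ≥ t, NAux b (update x i (x i - 1)) = b + s) (c : ℕ) :
    NAux c x = c + ∑ j, x j ∨ NAux c x < t + s := by
  refine or_iff_not_imp_right.2 fun hge => by_contra fun hne => ?_
  have hle := NAux_le_add_sum c x
  have hmem := NAux_update_mem_optionValues (a' := NAux c x - s) (a := c) (by omega)
    (Nat.sub_lt (Nat.pos_of_ne_zero hi) one_pos)
  rw [hy _ (by omega), Nat.sub_add_cancel (by omega)] at hmem
  exact NAux_notMem_optionValues c x hmem

theorem NAux_eq_add_sum_of_triangle_le {x : Fin n → ℕ} {a : ℕ}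
    (ha : (∑ j, x j) * (∑ j, x j + 1) / 2 ≤ a) : NAux a x = a + ∑ j, x j := by
  generalize hS : ∑ j, x j = S at ha
  induction S generalizing x a with
  | zero =>
    have := NAux_le_add_sum 0 x
    exact hS ▸ NAux_eq_add_sum_of_le (show NAux 0 x = 0 + ∑ j, x j by omega) (Nat.zero_le a)
  | succ s ih =>
    obtain ⟨i, -, hi⟩ := exists_ne_zero_of_sum_ne_zero (by omega : ∑ j, x j ≠ 0)
    have hsum_y : ∑ j, update x i (x i - 1) j = s := by
      have := sum_update_add_self x i (x i - 1)
      omega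
    have htriangle : (s + 1) * (s + 1 + 1) / 2 = s * (s + 1) / 2 + (s + 1) := by
      rw [show (s + 1) * (s + 1 + 1) = s * (s + 1) + 2 * (s + 1) by ring,
        Nat.add_mul_div_left _ _ two_pos]
    obtain ⟨c, hc, hcx⟩ := exists_le_NAux_eq_add_sum
      (NAux_eq_add_sum_or_lt hi hS fun b hb => ih hsum_y hb)
    exact hS ▸ NAux_eq_add_sum_of_le hcx (by omega)

end NAux

theorem AAux_quadratic_bound_general {n : ℕ} (x : Fin n → ℕ) :
    (∀ x₁ : ℕ, (∑ i, x i) * ((∑ i, x i) + 1) / 2 ≤ x₁ →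
      NAux x₁ x = x₁ + ∑ i, x i) ∧
    {x₁ : ℕ | NAux x₁ x = x₁ + ∑ i, x i}.Nonempty ∧
    sInf {x₁ : ℕ | NAux x₁ x = x₁ + ∑ i, x i} ≤
      (∑ i, x i) * ((∑ i, x i) + 1) / 2 := by
  have hthreshold : (∑ i, x i) * ((∑ i, x i) + 1) / 2 ∈ {x₁ | NAux x₁ x = x₁ + ∑ i, x i} :=
    NAux_eq_add_sum_of_triangle_le le_rfl
  exact ⟨fun _ => NAux_eq_add_sum_of_triangle_le, ⟨_, hthreshold⟩, Nat.sInf_le hthreshold⟩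

/-- With `S = x₂ + ⋯ + xₙ`, for every `x₁ ≥ S(S+1)/2` one has
`N(x₁, x₂, …, xₙ) = x₁ + S`; in particular the least threshold
`A(x₂, …, xₙ)` is well-defined and bounded above by the quadratic
`S(S+1)/2`. -/
theorem AAux_quadratic_bound {n : ℕ} (hn : 1 ≤ n) (x : Fin n → ℕ) :
    (∀ x₁ : ℕ, (∑ i, x i) * ((∑ i, x i) + 1) / 2 ≤ x₁ →
      NAux x₁ x = x₁ + ∑ i, x i) ∧
    {x₁ : ℕ | NAux x₁ x = x₁ + ∑ i, x i}.Nonempty ∧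
    sInf {x₁ : ℕ | NAux x₁ x = x₁ + ∑ i, x i} ≤
      (∑ i, x i) * ((∑ i, x i) + 1) / 2 :=
  AAux_quadratic_bound_general x
end

section
/- Let i ≥ 1 and m ≥ 1 be natural numbers, set b = m·2^i + (2^i − 1), and let c be a natural number such that (m·2^i) ⊕ c = m·2^i + c (i.e., the binary expansions of m·2^i and c share no common 1 bits). Then A(b, c) ≤ 1; that is, N(a, b, c) = a + b + c for every a ≥ 1. -/
/-- Sprague–Grundy value of the Auxiliary Nim game `(*a) ⊞ ((*b) ⊕ (*c))`:
the mex of the Sprague–Grundy values of the one-move successors, which are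
`(a',b,c)` with `a' < a`, `(a,b',c)` with `b' < b`, `(a,b,c')` with `c' < c`,
`(a',b',c)` with `a' < a, b' < b`, and `(a',b,c')` with `a' < a, c' < c`. -/
noncomputable def N3 (a b c : ℕ) : ℕ :=
  sInf {m : ℕ |
    (∀ a', a' < a → N3 a' b c ≠ m) ∧
    (∀ b', b' < b → N3 a b' c ≠ m) ∧
    (∀ c', c' < c → N3 a b c' ≠ m) ∧
    (∀ a', a' < a → ∀ b', b' < b → N3 a' b' c ≠ m) ∧
    (∀ a', a' < a → ∀ c', c' < c → N3 a' b c' ≠ m)}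
termination_by a + b + c
decreasing_by all_goals omega

/-- `A3 b c` is the least `a` such that `N3 a b c = a + b + c`. -/
noncomputable def A3 (b c : ℕ) : ℕ := sInf {a : ℕ | N3 a b c = a + b + c}

/-!
Every option of `(a, b, c)` has a smaller coordinate sum, so `N3 a b c ≤ a + b + c`, and equality
means that every `w < a + b + c` is the value of an option. Write `b = m * 2^i + (2^i - 1)` and
`c = e * 2^i + r` with `r < 2^i`; the hypothesis says `m ^^^ e = m + e`, whence
`b ^^^ (e * 2^i + s) = b + e * 2^i - s` for `s < 2^i`. As `N3 0 b c = b ^^^ c`, emptying the first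
heap reaches every `w ≤ b + e * 2^i`. By induction on `a + r`, the positions `(1, b, c')` with
`e * 2^i ≤ c' < c` reach `(b + e * 2^i, b + c]` and the positions `(a', b, c)` with `0 < a' < a`
reach the rest.
-/

def N3Options (a b c : ℕ) : Set ℕ :=
  {v | (∃ a' < a, N3 a' b c = v) ∨ (∃ b' < b, N3 a b' c = v) ∨ (∃ c' < c, N3 a b c' = v) ∨
    (∃ a' < a, ∃ b' < b, N3 a' b' c = v) ∨ (∃ a' < a, ∃ c' < c, N3 a' b c' = v)}

namespace N3Options

variable {a b c a' b' c' : ℕ}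

theorem left_mem (h : a' < a) : N3 a' b c ∈ N3Options a b c := Or.inl ⟨a', h, rfl⟩

theorem middle_mem (h : b' < b) : N3 a b' c ∈ N3Options a b c := Or.inr <| Or.inl ⟨b', h, rfl⟩

theorem right_mem (h : c' < c) : N3 a b c' ∈ N3Options a b c :=
  Or.inr <| Or.inr <| Or.inl ⟨c', h, rfl⟩

theorem left_middle_mem (ha : a' < a) (hb : b' < b) : N3 a' b' c ∈ N3Options a b c :=
  Or.inr <| Or.inr <| Or.inr <| Or.inl ⟨a', ha, b', hb, rfl⟩

theorem left_right_mem (ha : a' < a) (hc : c' < c) : N3 a' b c' ∈ N3Options a b c :=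
  Or.inr <| Or.inr <| Or.inr <| Or.inr ⟨a', ha, c', hc, rfl⟩

theorem exists_lt_of_mem {v : ℕ} (hv : v ∈ N3Options a b c) :
    ∃ a' b' c', a' + b' + c' < a + b + c ∧ N3 a' b' c' = v := by
  rcases hv with ⟨a', h, rfl⟩ | ⟨b', h, rfl⟩ | ⟨c', h, rfl⟩ | ⟨a', ha, b', hb, rfl⟩ |
      ⟨a', ha, c', hc, rfl⟩
  exacts [⟨_, _, _, by omega, rfl⟩, ⟨_, _, _, by omega, rfl⟩, ⟨_, _, _, by omega, rfl⟩,
    ⟨_, _, _, by omega, rfl⟩, ⟨_, _, _, by omega, rfl⟩]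

end N3Options

theorem Nat.sInf_compl_eq_of_forall_lt_mem {S : Set ℕ} {v : ℕ} (hv : v ∉ S)
    (h : ∀ w < v, w ∈ S) : sInf Sᶜ = v :=
  le_antisymm (Nat.sInf_le hv) (le_csInf ⟨v, hv⟩ fun _ hw => not_lt.1 fun hlt => hw (h _ hlt))

theorem N3_eq_sInf_compl (a b c : ℕ) : N3 a b c = sInf (N3Options a b c)ᶜ := by
  rw [N3]
  congr 1
  ext v
  simp [N3Options]

theorem N3_eq_of_forall_lt_mem {a b c v : ℕ} (hv : v ∉ N3Options a b c)
    (h : ∀ w < v, w ∈ N3Options a b c) : N3 a b c = v := by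
  rw [N3_eq_sInf_compl]
  exact Nat.sInf_compl_eq_of_forall_lt_mem hv h

theorem N3_le (a b c : ℕ) : N3 a b c ≤ a + b + c := by
  rw [N3_eq_sInf_compl]
  refine Nat.sInf_le fun hmem => ?_
  obtain ⟨a', b', c', hlt, hv⟩ := N3Options.exists_lt_of_mem hmem
  have := N3_le a' b' c'
  omega
termination_by a + b + c

theorem N3_eq_add_of_forall_lt_mem {a b c : ℕ} (h : ∀ w < a + b + c, w ∈ N3Options a b c) :
    N3 a b c = a + b + c := by
  refine N3_eq_of_forall_lt_mem (fun hmem => ?_) h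
  obtain ⟨a', b', c', hlt, hv⟩ := N3Options.exists_lt_of_mem hmem
  have := N3_le a' b' c'
  omega

theorem N3_zero_left (b c : ℕ) : N3 0 b c = b ^^^ c := by
  refine N3_eq_of_forall_lt_mem ?_ fun w hw => ?_
  · rintro (⟨_, h, -⟩ | ⟨b', hb, h⟩ | ⟨c', hc, h⟩ | ⟨_, h, -⟩ | ⟨_, h, -⟩)
    · omega
    · rw [N3_zero_left b' c] at h
      exact hb.ne (Nat.xor_left_injective h)
    · rw [N3_zero_left b c'] at h
      exact hc.ne (Nat.xor_right_injective h)
    all_goals omega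
  rcases Nat.lt_xor_cases hw with h | h
  · simpa [N3_zero_left (w ^^^ c) c] using N3Options.middle_mem (a := 0) (c := c) h
  · simpa [N3_zero_left b (w ^^^ b)] using N3Options.right_mem (a := 0) (b := b) h
termination_by b + c

namespace N3Options

variable {a b c c' w : ℕ}

theorem xor_mem (ha : 0 < a) (hc : c' ≤ c) : b ^^^ c' ∈ N3Options a b c := by
  rw [← N3_zero_left]
  rcases hc.eq_or_lt with rfl | hc
  exacts [left_mem ha, left_right_mem ha hc]

theorem mem_of_le_xor (ha : 0 < a) (hw : w ≤ b ^^^ c) : w ∈ N3Options a b c := by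
  rcases hw.eq_or_lt with rfl | hw
  · exact xor_mem ha le_rfl
  rcases Nat.lt_xor_cases hw with h | h
  · simpa [N3_zero_left] using left_middle_mem (c := c) ha h
  · simpa using xor_mem (b := b) ha h.le

end N3Options

theorem Nat.mul_two_pow_add_xor {i x y : ℕ} (a b : ℕ) (hx : x < 2 ^ i) (hy : y < 2 ^ i) :
    (a * 2 ^ i + x) ^^^ (b * 2 ^ i + y) = (a ^^^ b) * 2 ^ i + (x ^^^ y) := by
  rw [← Nat.div_add_mod' ((a * 2 ^ i + x) ^^^ (b * 2 ^ i + y)) (2 ^ i), Nat.xor_div_two_pow,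
    Nat.xor_mod_two_pow]
  have hdiv : ∀ {z} (a), z < 2 ^ i → (a * 2 ^ i + z) / 2 ^ i = a := fun a hz => by
    rw [Nat.add_comm, Nat.add_mul_div_right _ _ (Nat.two_pow_pos i), Nat.div_eq_of_lt hz,
      Nat.zero_add]
  rw [hdiv a hx, hdiv b hy, Nat.mul_add_mod', Nat.mul_add_mod', Nat.mod_eq_of_lt hx,
    Nat.mod_eq_of_lt hy]

theorem Nat.two_pow_sub_one_xor {i s : ℕ} (hs : s < 2 ^ i) :
    (2 ^ i - 1) ^^^ s = 2 ^ i - 1 - s := by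
  apply Nat.eq_of_testBit_eq
  intro j
  rw [Nat.testBit_xor, Nat.sub_sub, Nat.add_comm 1 s, Nat.testBit_two_pow_sub_succ hs,
    Nat.testBit_two_pow_sub_one]
  rcases lt_or_ge j i with hj | hj
  · simp [hj]
  · simp [hj.not_gt, Nat.testBit_lt_two_pow (hs.trans_le (Nat.pow_le_pow_right two_pos hj))]

theorem Nat.xor_div_two_pow_eq_add {i m c : ℕ} (h : (m * 2 ^ i) ^^^ c = m * 2 ^ i + c) :
    m ^^^ c / 2 ^ i = m + c / 2 ^ i := by
  have h' := congrArg (· / 2 ^ i) h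
  simp only [Nat.xor_div_two_pow, Nat.mul_div_cancel _ (Nat.two_pow_pos i)] at h'
  rw [h', Nat.add_comm, Nat.add_mul_div_right _ _ (Nat.two_pow_pos i), Nat.add_comm]

theorem trailing_ones_xor_add {i m e s : ℕ} (hme : m ^^^ e = m + e) (hs : s < 2 ^ i) :
    ((m * 2 ^ i + (2 ^ i - 1)) ^^^ (e * 2 ^ i + s)) + s =
      m * 2 ^ i + (2 ^ i - 1) + e * 2 ^ i := by
  rw [Nat.mul_two_pow_add_xor m e (Nat.sub_lt (Nat.two_pow_pos i) one_pos) hs, hme,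
    Nat.two_pow_sub_one_xor hs, Nat.add_mul]
  omega

theorem N3_trailing_ones {i m e : ℕ} (hme : m ^^^ e = m + e) (a r : ℕ) (ha : 1 ≤ a)
    (hr : r < 2 ^ i) :
    N3 a (m * 2 ^ i + (2 ^ i - 1)) (e * 2 ^ i + r) =
      a + (m * 2 ^ i + (2 ^ i - 1)) + (e * 2 ^ i + r) := by
  set b := m * 2 ^ i + (2 ^ i - 1)
  have hxor : ∀ s < 2 ^ i, (b ^^^ (e * 2 ^ i + s)) + s = b + e * 2 ^ i :=
    fun s hs => trailing_ones_xor_add hme hs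
  refine N3_eq_add_of_forall_lt_mem fun w hw => ?_
  rcases le_or_gt w (b + e * 2 ^ i) with hwb | hwb
  · rcases le_or_gt w (b ^^^ (e * 2 ^ i + r)) with hwx | hwx
    · exact N3Options.mem_of_le_xor ha hwx
    obtain ⟨s, rfl⟩ : ∃ s, w = b + e * 2 ^ i - s := ⟨b + e * 2 ^ i - w, by omega⟩
    have hsr : s ≤ r := by have := hxor r hr; omega
    have hs := hxor s (by omega)
    rw [show b + e * 2 ^ i - s = b ^^^ (e * 2 ^ i + s) by omega]
    exact N3Options.xor_mem ha (by omega)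
  rcases le_or_gt w (b + (e * 2 ^ i + r)) with hwc | hwc
  · obtain ⟨s, hsr, rfl⟩ : ∃ s < r, w = 1 + b + (e * 2 ^ i + s) :=
      ⟨w - 1 - b - e * 2 ^ i, by omega, by omega⟩
    rw [← N3_trailing_ones hme 1 s le_rfl (hsr.trans hr)]
    rcases ha.eq_or_lt with rfl | ha
    exacts [N3Options.right_mem (by omega), N3Options.left_right_mem ha (by omega)]
  · obtain ⟨a', ha', rfl⟩ : ∃ a' < a, w = a' + b + (e * 2 ^ i + r) :=
      ⟨w - b - (e * 2 ^ i + r), by omega, by omega⟩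
    rw [← N3_trailing_ones hme a' r (by omega) hr]
    exact N3Options.left_mem ha'
termination_by a + r

theorem A3_trailing_ones_general (i m c : ℕ)
    (hc : (m * 2 ^ i) ^^^ c = m * 2 ^ i + c) :
    A3 (m * 2 ^ i + (2 ^ i - 1)) c ≤ 1 ∧
    ∀ a : ℕ, 1 ≤ a →
      N3 a (m * 2 ^ i + (2 ^ i - 1)) c = a + (m * 2 ^ i + (2 ^ i - 1)) + c := by
  have hme := Nat.xor_div_two_pow_eq_add hc
  have hr := Nat.mod_lt c (Nat.two_pow_pos i)
  rw [← Nat.div_add_mod' c (2 ^ i)]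
  exact ⟨Nat.sInf_le (N3_trailing_ones hme 1 _ le_rfl hr),
    fun a ha => N3_trailing_ones hme a _ ha hr⟩

/-- For `i ≥ 1`, `m ≥ 1`, `b = m * 2^i + (2^i - 1)` and `c` with
`(m * 2^i) ⊕ c = m * 2^i + c`: `A(b,c) ≤ 1`, that is,
`N(a,b,c) = a + b + c` for every `a ≥ 1`. -/
theorem A3_trailing_ones (i m c : ℕ) (hi : 1 ≤ i) (hm : 1 ≤ m)
    (hc : (m * 2 ^ i) ^^^ c = m * 2 ^ i + c) :
    A3 (m * 2 ^ i + (2 ^ i - 1)) c ≤ 1 ∧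
    ∀ a : ℕ, 1 ≤ a →
      N3 a (m * 2 ^ i + (2 ^ i - 1)) c = a + (m * 2 ^ i + (2 ^ i - 1)) + c :=
  A3_trailing_ones_general i m c hc
end
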